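/- arXiv:2305.10741 — 2 statements merged into one kernel-verified Lean document; each statement's English description precedes it below -/
import Mathlib

section
/- Let q ≥ 3 be an integer and let a = a_1 a_2 … a_n ∈ C_{q,n} satisfy a_i = a_{i+2} for every i with 1 ≤ i ≤ n−2. If n = 2 then |H_2(a)| = q^2 − 3q + 3, and if n ≥ 3 then |H_2(a)| = (1/2)(n−4)(n−3)(q−2)^2 + n(3q^2 − 13q + 14) − 6q^2 + 27q − 30 (an equality of integers, the product (n−4)(n−3) being even). -/
open scoped Classical

/-- A sequence `a` of length `n` over an alphabet of size `q` is homopolymer free (HF)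
if no two consecutive symbols are equal. -/
def isHF {q n : ℕ} (a : Fin n → Fin q) : Prop :=
  ∀ i : ℕ, ∀ h : i + 1 < n, a ⟨i, by omega⟩ ≠ a ⟨i + 1, h⟩

/-- `HFset q n` is the set `C_{q,n}` of all HF sequences of length `n`. -/
noncomputable def HFset (q n : ℕ) : Finset (Fin n → Fin q) :=
  Finset.univ.filter isHF

/-- The HF sphere `H_r(a)`: all HF sequences at Hamming distance exactly `r` from `a`. -/
noncomputable def HFsphere {q n : ℕ} (a : Fin n → Fin q) (r : ℕ) :
    Finset (Fin n → Fin q) :=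
  (HFset q n).filter (fun z => hammingDist a z = r)

/-!
An HF word at distance 2 from `a` differs from it at exactly two positions `i < j`, and there
its values `(u, v)` must avoid `a`'s own value and the values of the unchanged neighbours of each
position, with `u ≠ v` in addition when `j = i + 1`; so each fibre is a product of two
complements, minus its diagonal in the adjacent case. When `a` is 2-periodic all neighbours of a
position carry the same symbol, and the fibre has `(q - 2) ^ 2` elements except for adjacent
pairs, where it has `(q - 2) * (q - 3)` inside, `(q - 2) ^ 2` at one end and `q ^ 2 - 3 q + 3`
when `n = 2`. Summing over the `n.choose 2` pairs gives the formula.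
-/
open Finset SimpleGraph Function

lemma isHF_iff_pathGraph_adj {q n : ℕ} {z : Fin n → Fin q} :
    isHF z ↔ ∀ k l : Fin n, (pathGraph n).Adj k l → z k ≠ z l := by
  refine ⟨fun hz k l hkl => ?_, fun h i hi => h _ _ (pathGraph_adj.mpr (Or.inl rfl))⟩
  rcases pathGraph_adj.mp hkl with h | h
  · rw [show l = ⟨k + 1, h ▸ l.isLt⟩ from Fin.ext h.symm]
    exact hz k _
  · rw [show k = ⟨l + 1, h ▸ k.isLt⟩ from Fin.ext h.symm]
    exact (hz l _).symm

lemma exists_pathGraph_adj_ne_iff {n : ℕ} {i j : Fin n} :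
    (∃ k, (pathGraph n).Adj i k ∧ k ≠ j) ↔
      (0 < i.val ∧ i.val ≠ j.val + 1) ∨ (i.val + 1 < n ∧ i.val + 1 ≠ j.val) := by
  constructor
  · rintro ⟨k, hik, hkj⟩
    rw [pathGraph_adj] at hik
    rw [Ne, Fin.ext_iff] at hkj
    omega
  · rintro (⟨h0, h⟩ | ⟨h1, h⟩)
    · refine ⟨⟨i.val - 1, by omega⟩, pathGraph_adj.mpr ?_, fun hk => h ?_⟩
      · simp only; omega
      · simp only [← hk]; omega
    · refine ⟨⟨i.val + 1, h1⟩, pathGraph_adj.mpr (Or.inl rfl), fun hk => h ?_⟩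
      simp only [← hk]

section PairCount

variable {α : Type*} [Fintype α] [DecidableEq α]

lemma card_pairs_notMem (A B : Finset α) :
    #{w : α × α | w.1 ∉ A ∧ w.2 ∉ B} = #Aᶜ * #Bᶜ := by
  rw [← card_product]
  congr 1
  ext w
  simp

lemma card_pairs_notMem_ne_add (A B : Finset α) :
    #{w : α × α | w.1 ∉ A ∧ w.2 ∉ B ∧ w.1 ≠ w.2} + #(A ∪ B)ᶜ = #Aᶜ * #Bᶜ := by
  rw [← card_pairs_notMem, ← card_filter_add_card_filter_not
    (s := {w : α × α | w.1 ∉ A ∧ w.2 ∉ B}) (p := fun w => w.1 ≠ w.2),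
    filter_filter, filter_filter]
  simp only [and_assoc, not_not]
  congr 1
  refine card_nbij' (fun c => (c, c)) Prod.fst ?_ ?_ ?_ ?_
  · intro c hc
    simp_all
  · intro w hw
    simp only [coe_filter, mem_univ, true_and, Set.mem_ofPred_eq] at hw
    simp [hw.1, hw.2.2 ▸ hw.2.1]
  · intro c _
    rfl
  · intro w hw
    simp only [coe_filter, mem_univ, true_and, Set.mem_ofPred_eq] at hw
    exact Prod.ext rfl hw.2.2

end PairCount

section Fibers

variable {q n : ℕ}

noncomputable def forbidden {α : Type*} [DecidableEq α] (a : Fin n → α) (i j : Fin n) : Finset α :=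
  insert (a i) (({k | (pathGraph n).Adj i k ∧ k ≠ j} : Finset (Fin n)).image a)

lemma isHF_update_update_iff {a : Fin n → Fin q} (ha : isHF a) {i j : Fin n} (hij : i ≠ j)
    (u v : Fin q) :
    isHF (update (update a i u) j v) ↔
      (∀ k, (pathGraph n).Adj i k → k ≠ j → u ≠ a k) ∧
      (∀ k, (pathGraph n).Adj j k → k ≠ i → v ≠ a k) ∧ ((pathGraph n).Adj i j → u ≠ v) := by
  rw [isHF_iff_pathGraph_adj] at ha ⊢
  constructor
  · intro hz
    refine ⟨fun k hik hkj => ?_, fun k hjk hki => ?_, fun hadj => ?_⟩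
    · simpa [update_apply, hkj, hik.ne', hij] using hz i k hik
    · simpa [update_apply, hki, hjk.ne'] using hz j k hjk
    · simpa [update_apply, hij] using hz i j hadj
  · rintro ⟨hi, hj, hadj⟩ k l hkl
    simp only [update_apply]
    split_ifs <;> grind [SimpleGraph.Adj.symm, SimpleGraph.irrefl]

lemma notMem_forbidden {α : Type*} [DecidableEq α] {a : Fin n → α} {i j : Fin n} {u : α} :
    u ∉ forbidden a i j ↔ u ≠ a i ∧ ∀ k, (pathGraph n).Adj i k → k ≠ j → u ≠ a k := by
  simp [forbidden, eq_comm]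

lemma filter_ne_eq_pair_iff {α : Type*} [DecidableEq α] {a z : Fin n → α} {i j : Fin n}
    (hij : i ≠ j) :
    ({k | a k ≠ z k} : Finset (Fin n)) = {i, j} ↔
      z i ≠ a i ∧ z j ≠ a j ∧ update (update a i (z i)) j (z j) = z := by
  constructor
  · intro h
    have hmem : ∀ k, a k ≠ z k ↔ k = i ∨ k = j := fun k => by
      simpa using congrArg (k ∈ ·) h
    refine ⟨fun h' => (hmem i).2 (Or.inl rfl) h'.symm, fun h' => (hmem j).2 (Or.inr rfl) h'.symm,
      funext fun k => ?_⟩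
    by_cases hkj : k = j
    · rw [hkj, update_self]
    by_cases hki : k = i
    · rw [hki, update_of_ne hij, update_self]
    rw [update_of_ne hkj, update_of_ne hki]
    by_contra hk
    exact (hmem k).1 hk |>.elim hki hkj
  · rintro ⟨hi, hj, hz⟩
    ext k
    rw [← hz]
    by_cases hkj : k = j
    · simp [hkj, hj.symm]
    by_cases hki : k = i
    · simp [hki, hij, hi.symm]
    simp [hki, hkj]

noncomputable def HFsphereTwoAt (a : Fin n → Fin q) (i j : Fin n) : Finset (Fin n → Fin q) :=
  (HFsphere a 2).filter fun z => ({k | a k ≠ z k} : Finset (Fin n)) = {i, j}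

lemma card_HFsphereTwoAt {a : Fin n → Fin q} (ha : isHF a) {i j : Fin n} (hij : i ≠ j) :
    #(HFsphereTwoAt a i j) = #{w : Fin q × Fin q | w.1 ∉ forbidden a i j ∧
      w.2 ∉ forbidden a j i ∧ ((pathGraph n).Adj i j → w.1 ≠ w.2)} := by
  set g : Fin q × Fin q → Fin n → Fin q := fun w => update (update a i w.1) j w.2
  have hgi : ∀ w, g w i = w.1 := fun w => by simp [g, update_of_ne hij]
  have hgj : ∀ w, g w j = w.2 := fun w => by simp [g]
  have hg : Injective g := fun w w' h => Prod.ext (by simpa [hgi] using congrFun h i)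
    (by simpa [hgj] using congrFun h j)
  rw [← card_image_of_injective _ hg]
  congr 1
  ext z
  simp only [HFsphereTwoAt, HFsphere, HFset, mem_filter, mem_univ, true_and, mem_image,
    notMem_forbidden]
  constructor
  · rintro ⟨⟨hz, -⟩, hD⟩
    obtain ⟨hi, hj, hgz⟩ := (filter_ne_eq_pair_iff hij).1 hD
    rw [← hgz, isHF_update_update_iff ha hij] at hz
    exact ⟨(z i, z j), ⟨⟨hi, hz.1⟩, ⟨hj, hz.2.1⟩, hz.2.2⟩, hgz⟩
  · rintro ⟨w, ⟨⟨hi, hi'⟩, ⟨hj, hj'⟩, hadj⟩, rfl⟩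
    have hD : ({k | a k ≠ g w k} : Finset (Fin n)) = {i, j} :=
      (filter_ne_eq_pair_iff hij).2 ⟨by rwa [hgi], by rwa [hgj], by rw [hgi, hgj]⟩
    refine ⟨⟨(isHF_update_update_iff ha hij _ _).2 ⟨hi', hj', hadj⟩, ?_⟩, hD⟩
    rw [hammingDist, hD, card_pair hij]

end Fibers

section Periodic

def IsTwoPeriodic {α : Type*} {n : ℕ} (a : Fin n → α) : Prop :=
  ∀ i : ℕ, ∀ h : i + 2 < n, a ⟨i, (Nat.le_add_right i 2).trans_lt h⟩ = a ⟨i + 2, h⟩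

variable {q n : ℕ} {a : Fin n → Fin q}

lemma eq_of_pathGraph_adj_of_adj {α : Type*} {a : Fin n → α} (hper : IsTwoPeriodic a)
    {i k l : Fin n} (hk : (pathGraph n).Adj i k) (hl : (pathGraph n).Adj i l) : a k = a l := by
  have step : ∀ k l : Fin n, k.val + 2 = l.val → a k = a l := fun k l h => by
    rw [show l = ⟨k + 2, h ▸ l.isLt⟩ from Fin.ext h.symm]
    exact hper k _
  rw [pathGraph_adj] at hk hl
  rcases lt_trichotomy k.val l.val with h | h | h
  · exact step k l (by omega)
  · exact congrArg a (Fin.ext h)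
  · exact (step l k (by omega)).symm

lemma card_forbidden (ha : isHF a) (hper : IsTwoPeriodic a) (i j : Fin n) :
    #(forbidden a i j) = if ∃ k, (pathGraph n).Adj i k ∧ k ≠ j then 2 else 1 := by
  split_ifs with h
  · obtain ⟨k, hik, hkj⟩ := h
    have himage : (({k | (pathGraph n).Adj i k ∧ k ≠ j} : Finset (Fin n)).image a) = {a k} := by
      ext c
      simp only [mem_image, mem_filter, mem_univ, true_and, mem_singleton]
      constructor
      · rintro ⟨l, ⟨hil, -⟩, rfl⟩
        exact eq_of_pathGraph_adj_of_adj hper hil hik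
      · rintro rfl
        exact ⟨k, ⟨hik, hkj⟩, rfl⟩
    rw [forbidden, himage, card_pair (isHF_iff_pathGraph_adj.1 ha i k hik)]
  · have himage : (({k | (pathGraph n).Adj i k ∧ k ≠ j} : Finset (Fin n)).image a) = ∅ := by
      simpa [filter_eq_empty_iff] using h
    rw [forbidden, himage, insert_empty, card_singleton]

lemma forbidden_union_forbidden (hper : IsTwoPeriodic a) {i j : Fin n} (hij : (pathGraph n).Adj i j) :
    forbidden a i j ∪ forbidden a j i = {a i, a j} := by
  ext c
  simp only [forbidden, mem_union, mem_insert, mem_image, mem_filter, mem_univ, true_and,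
    mem_singleton]
  constructor
  · rintro ((h | ⟨k, ⟨hik, -⟩, rfl⟩) | (h | ⟨k, ⟨hjk, -⟩, rfl⟩))
    · exact Or.inl h
    · exact Or.inr (eq_of_pathGraph_adj_of_adj hper hik hij)
    · exact Or.inr h
    · exact Or.inl (eq_of_pathGraph_adj_of_adj hper hjk hij.symm)
  · rintro (h | h)
    · exact Or.inl (Or.inl h)
    · exact Or.inr (Or.inl h)

lemma cast_card_compl_fin (s : Finset (Fin q)) : (#sᶜ : ℚ) = q - #s := by
  rw [card_compl, Fintype.card_fin, Nat.cast_sub ((card_le_univ s).trans_eq (Fintype.card_fin q))]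

lemma cast_card_compl_forbidden (ha : isHF a) (hper : IsTwoPeriodic a) (i j : Fin n) :
    (#(forbidden a i j)ᶜ : ℚ) = q - if ∃ k, (pathGraph n).Adj i k ∧ k ≠ j then 2 else 1 := by
  rw [cast_card_compl_fin, card_forbidden ha hper]
  split_ifs <;> simp

/-- At the left end (`k = 0`) position `k` has no unchanged neighbour, so `q - 1` values are
allowed there instead of `q - 2`, and likewise at the right end; the `q - 2` pairs with equal
entries are subtracted. -/
def adjacentPairCount (q n k : ℕ) : ℚ :=
  ((q : ℚ) - if 0 < k then 2 else 1) * ((q : ℚ) - if k + 2 < n then 2 else 1) - (q - 2)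

lemma card_HFsphereTwoAt_of_lt (ha : isHF a) (hper : IsTwoPeriodic a) (hn : 2 ≤ n)
    {i j : Fin n} (hij : i < j) :
    (#(HFsphereTwoAt a i j) : ℚ) =
      if j.val = i.val + 1 then adjacentPairCount q n i else ((q : ℚ) - 2) ^ 2 := by
  have hlt : i.val < j.val := hij
  rw [card_HFsphereTwoAt ha hij.ne]
  split_ifs with hadj
  · have hA : (pathGraph n).Adj i j := pathGraph_adj.2 (Or.inl hadj.symm)
    have hsum := card_pairs_notMem_ne_add (forbidden a i j) (forbidden a j i)
    rw [forbidden_union_forbidden hper hA] at hsum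
    simp only [hA, forall_const]
    rw [← Nat.cast_inj (R := ℚ), Nat.cast_add, Nat.cast_mul] at hsum
    rw [eq_sub_of_add_eq hsum, cast_card_compl_forbidden ha hper, cast_card_compl_forbidden ha hper,
      cast_card_compl_fin, card_pair (isHF_iff_pathGraph_adj.1 ha i j hA), adjacentPairCount]
    simp only [exists_pathGraph_adj_ne_iff,
      show (0 < i.val ∧ i.val ≠ j.val + 1) ∨ (i.val + 1 < n ∧ i.val + 1 ≠ j.val) ↔
        0 < i.val by omega,
      show (0 < j.val ∧ j.val ≠ i.val + 1) ∨ (j.val + 1 < n ∧ j.val + 1 ≠ i.val) ↔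
        i.val + 2 < n by omega]
    push_cast
    ring
  · have hA : ¬(pathGraph n).Adj i j := by rw [pathGraph_adj]; omega
    simp only [hA, false_implies, and_true]
    rw [card_pairs_notMem, Nat.cast_mul, cast_card_compl_forbidden ha hper,
      cast_card_compl_forbidden ha hper, if_pos (exists_pathGraph_adj_ne_iff.2 (by omega)),
      if_pos (exists_pathGraph_adj_ne_iff.2 (by omega))]
    ring

end Periodic

lemma Prod.eq_of_pair_eq_pair {α : Type*} [LinearOrder α] {p p' : α × α} (hp : p.1 < p.2)
    (hp' : p'.1 < p'.2) (h : ({p.1, p.2} : Finset α) = {p'.1, p'.2}) : p = p' := by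
  rw [← coe_inj, coe_pair, coe_pair, Set.pair_eq_pair_iff] at h
  rcases h with ⟨h1, h2⟩ | ⟨h1, h2⟩
  · exact Prod.ext h1 h2
  · exact absurd hp (by rw [h1, h2]; exact hp'.not_gt)

lemma sum_filter_lt_ite_succ {M : Type*} [AddCommMonoid M] (n : ℕ) (φ : ℕ → M) :
    ∑ p ∈ ({p : Fin n × Fin n | p.1 < p.2} : Finset _),
      (if p.2.val = p.1.val + 1 then φ p.1 else 0) = ∑ k ∈ range (n - 1), φ k := by
  rw [← sum_filter]
  refine sum_bij (fun p _ => p.1.val) ?_ ?_ ?_ ?_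
  · intro p hp
    simp only [mem_filter, mem_univ, true_and] at hp
    simp only [mem_range]
    omega
  · intro p hp p' hp' h
    simp only [mem_filter, mem_univ, true_and] at hp hp'
    exact Prod.ext (Fin.ext h) (Fin.ext (by omega))
  · intro k hk
    simp only [mem_range] at hk
    exact ⟨(⟨k, by omega⟩, ⟨k + 1, by omega⟩), by simp, rfl⟩
  · intro p _
    rfl

section Sphere

variable {q n : ℕ}

lemma HFsphere_two_eq_biUnion (a : Fin n → Fin q) :
    HFsphere a 2 = ({p : Fin n × Fin n | p.1 < p.2} : Finset _).biUnion
      fun p => HFsphereTwoAt a p.1 p.2 := by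
  ext z
  simp only [mem_biUnion, mem_filter, mem_univ, true_and, HFsphereTwoAt]
  refine ⟨fun hz => ?_, fun ⟨_, _, hz, _⟩ => hz⟩
  obtain ⟨x, y, hxy, hD⟩ := card_eq_two.1 (mem_filter.1 hz).2
  rcases hxy.lt_or_gt with h | h
  · exact ⟨(x, y), h, hz, hD⟩
  · exact ⟨(y, x), h, hz, hD.trans (pair_comm x y)⟩

lemma card_HFsphere_two (a : Fin n → Fin q) :
    #(HFsphere a 2) = ∑ p ∈ ({p : Fin n × Fin n | p.1 < p.2} : Finset _),
      #(HFsphereTwoAt a p.1 p.2) := by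
  rw [HFsphere_two_eq_biUnion, card_biUnion]
  intro p hp p' hp' hpp'
  refine disjoint_left.2 fun z hz hz' => hpp' (Prod.eq_of_pair_eq_pair ?_ ?_ ?_)
  · simpa using hp
  · simpa using hp'
  · exact (mem_filter.1 hz).2.symm.trans (mem_filter.1 hz').2

lemma cast_card_HFsphere_two_of_periodic {a : Fin n → Fin q} (ha : isHF a)
    (hper : IsTwoPeriodic a) (hn : 2 ≤ n) :
    (#(HFsphere a 2) : ℚ) = n.choose 2 * ((q : ℚ) - 2) ^ 2 +
      ∑ k ∈ range (n - 1), (adjacentPairCount q n k - ((q : ℚ) - 2) ^ 2) := by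
  have hpairs : #{p : Fin n × Fin n | p.1 < p.2} = n.choose 2 := by
    simpa using Fintype.card_product_filter_lt (α := Fin n)
  rw [card_HFsphere_two, Nat.cast_sum, ← sum_filter_lt_ite_succ, ← hpairs, ← nsmul_eq_mul,
    ← sum_const, ← sum_add_distrib]
  refine sum_congr rfl fun p hp => ?_
  rw [card_HFsphereTwoAt_of_lt ha hper hn (mem_filter.1 hp).2]
  split_ifs <;> ring

end Sphere

lemma sum_adjacentPairCount (q m : ℕ) :
    ∑ k ∈ range (m + 2), (adjacentPairCount q (m + 3) k - ((q : ℚ) - 2) ^ 2) =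
      -((m : ℚ) * ((q : ℚ) - 2)) := by
  have hinner : ∀ k ∈ range m,
      adjacentPairCount q (m + 3) (k + 1) - ((q : ℚ) - 2) ^ 2 = -((q : ℚ) - 2) := by
    intro k hk
    rw [mem_range] at hk
    simp only [adjacentPairCount, if_pos k.succ_pos, if_pos (show k + 1 + 2 < m + 3 by omega)]
    ring
  rw [sum_range_succ, sum_range_succ', sum_congr rfl hinner, sum_const, card_range, nsmul_eq_mul]
  simp only [adjacentPairCount, if_neg (lt_irrefl 0), if_pos (show 0 + 2 < m + 3 by omega),
    if_pos (show 0 < m + 1 by omega), if_neg (show ¬m + 1 + 2 < m + 3 by omega)]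
  ring

theorem stmt_10 (q n : ℕ)
    (a : Fin n → Fin q) (ha : a ∈ HFset q n)
    (hper : ∀ i : ℕ, ∀ h : i + 2 < n, a ⟨i, by omega⟩ = a ⟨i + 2, h⟩) :
    (n = 2 → ((HFsphere a 2).card : ℚ) = (q : ℚ) ^ 2 - 3 * (q : ℚ) + 3) ∧
    (3 ≤ n → ((HFsphere a 2).card : ℚ) =
      (1 / 2) * ((n : ℚ) - 4) * ((n : ℚ) - 3) * ((q : ℚ) - 2) ^ 2
        + (n : ℚ) * (3 * (q : ℚ) ^ 2 - 13 * (q : ℚ) + 14)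
        - 6 * (q : ℚ) ^ 2 + 27 * (q : ℚ) - 30) := by
  have haHF : isHF a := (mem_filter.1 ha).2
  refine ⟨fun hn => ?_, fun hn => ?_⟩
  · subst hn
    rw [cast_card_HFsphere_two_of_periodic haHF hper le_rfl, Nat.choose_self,
      show 2 - 1 = 1 from rfl, sum_range_one, adjacentPairCount, if_neg (lt_irrefl 0),
      if_neg (lt_irrefl 2)]
    push_cast
    ring
  · obtain ⟨m, rfl⟩ : ∃ m, n = m + 3 := ⟨n - 3, by omega⟩
    rw [cast_card_HFsphere_two_of_periodic haHF hper (by omega), show m + 3 - 1 = m + 2 from rfl,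
      sum_adjacentPairCount, Nat.cast_choose_two]
    push_cast
    ring
end

section
/- Let q ≥ 2, n ≥ 1 and d ≥ 1 be integers and let C ⊆ C_{q,n} be a nonempty HF code in which any two distinct codewords have Hamming distance at least d, with M = |C|. Let Ū = (1/M) · Σ_{c ∈ C} Σ_{r=0}^{⌊(d−1)/2⌋} |H_r(c)| (a positive rational number). Then M ≤ ⌊ q(q−1)^{n−1} / Ū ⌋. -/
/-!
Sphere packing inside the HF space. With `e = ⌊(d-1)/2⌋`, the HF balls of radius `e` around
distinct codewords are disjoint (a common point would put the codewords at distance at most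
`2e < d`), and each lies in `C_{q,n}`, which has `q(q-1)^{n-1}` elements: the first symbol is free
and every later one is any of the `q-1` symbols differing from its predecessor. The balls have
total size `M Ū` and each contains its centre, so `Ū ≥ 1` and `M Ū ≤ q(q-1)^{n-1}`.
-/

open scoped Classical

open Finset

section HFSpace

variable {q n : ℕ}

@[simp]
lemma mem_HFset {a : Fin n → Fin q} : a ∈ HFset q n ↔ isHF a := by
  simp [HFset]

lemma isHF_cons {x : Fin q} {t : Fin (n + 1) → Fin q} :
    isHF (Fin.cons x t : Fin (n + 2) → Fin q) ↔ x ≠ t 0 ∧ isHF t := by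
  constructor
  · intro h
    exact ⟨h 0 (Nat.succ_lt_succ n.succ_pos), fun i hi => h (i + 1) (Nat.succ_lt_succ hi)⟩
  · rintro ⟨hx, ht⟩ (_ | i) hi
    · exact hx
    · exact ht i (Nat.lt_of_succ_lt_succ hi)

lemma card_HFset_one : (HFset q 1).card = q := by
  have : HFset q 1 = univ := by
    ext a
    simp [isHF]
  simp [this]

lemma card_HFset_add_two : (HFset q (n + 2)).card = (HFset q (n + 1)).card * (q - 1) := by
  have hcons : (Finset.sigma (HFset q (n + 1)) fun t => univ.erase (t 0)).card =
      (HFset q (n + 2)).card := by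
    refine card_nbij' (fun p : (_ : Fin (n + 1) → Fin q) × Fin q =>
        (Fin.cons p.2 p.1 : Fin (n + 2) → Fin q)) (fun a => ⟨Fin.tail a, a 0⟩) ?_ ?_ ?_ ?_
    · rintro ⟨t, x⟩ h
      simp_all [isHF_cons]
    · intro a ha
      obtain ⟨h0, htail⟩ := isHF_cons.mp
        (by rw [Fin.cons_self_tail]; simpa using ha : isHF (Fin.cons (a 0) (Fin.tail a)))
      simp_all
    · rintro ⟨t, x⟩ -
      simp
    · rintro a -
      simp
  simp [← hcons, card_sigma, card_erase_of_mem]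

lemma card_HFset (hn : 1 ≤ n) : (HFset q n).card = q * (q - 1) ^ (n - 1) := by
  obtain ⟨m, rfl⟩ := Nat.exists_eq_add_of_le' hn
  induction m with
  | zero => simp [card_HFset_one]
  | succ m ih => rw [card_HFset_add_two, ih (by omega)]; simp [pow_succ, mul_assoc]

noncomputable def HFball (c : Fin n → Fin q) (e : ℕ) : Finset (Fin n → Fin q) :=
  (HFset q n).filter fun z => hammingDist c z ≤ e

lemma card_HFball (c : Fin n → Fin q) (e : ℕ) :
    (HFball c e).card = ∑ r ∈ range (e + 1), (HFsphere c r).card := by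
  rw [card_eq_sum_card_fiberwise (f := hammingDist c) (t := range (e + 1))]
  · refine sum_congr rfl fun r hr => congrArg card ?_
    ext z
    have := mem_range.mp hr
    simp only [HFball, HFsphere, mem_filter]
    grind
  · intro z hz
    simp_all [HFball]

lemma self_mem_HFball {c : Fin n → Fin q} (hc : c ∈ HFset q n) (e : ℕ) : c ∈ HFball c e := by
  simpa [HFball] using hc

lemma disjoint_HFball {c₁ c₂ : Fin n → Fin q} {e : ℕ} (h : 2 * e < hammingDist c₁ c₂) :
    Disjoint (HFball c₁ e) (HFball c₂ e) := by
  refine disjoint_left.mpr fun z hz₁ hz₂ => ?_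
  simp only [HFball, mem_filter] at hz₁ hz₂
  have := hammingDist_triangle_right c₁ c₂ z
  omega

lemma sum_card_HFball_le_card_HFset {C : Finset (Fin n → Fin q)} {e : ℕ}
    (hC : ∀ c₁ ∈ C, ∀ c₂ ∈ C, c₁ ≠ c₂ → 2 * e < hammingDist c₁ c₂) :
    ∑ c ∈ C, (HFball c e).card ≤ (HFset q n).card := by
  rw [← card_biUnion fun c₁ h₁ c₂ h₂ hne => disjoint_HFball (hC c₁ h₁ c₂ h₂ hne)]
  exact card_le_card (biUnion_subset.mpr fun c _ => filter_subset _ _)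

end HFSpace

lemma le_div_div_of_le_of_le {K : Type*} [Field K] [LinearOrder K] [IsStrictOrderedRing K]
    {M S N : K} (hM : 0 ≤ M) (hMS : M ≤ S) (hSN : S ≤ N) : M ≤ N / (S / M) := by
  rcases hM.eq_or_lt with rfl | hM
  · simp
  rw [le_div_iff₀ (div_pos (hM.trans_le hMS) hM), mul_div_cancel₀ _ hM.ne']
  exact hSN

theorem stmt_15_general (q n d : ℕ) (hq : 2 ≤ q) (hn : 1 ≤ n)
    (C : Finset (Fin n → Fin q)) (hC : C ⊆ HFset q n)
    (hdist : ∀ c₁ ∈ C, ∀ c₂ ∈ C, c₁ ≠ c₂ → d ≤ hammingDist c₁ c₂)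
    (U : ℚ)
    (hU : U = (∑ c ∈ C, ∑ r ∈ Finset.range ((d - 1) / 2 + 1),
      ((HFsphere c r).card : ℚ)) / (C.card : ℚ)) :
    (C.card : ℤ) ≤ ⌊((q : ℚ) * ((q : ℚ) - 1) ^ (n - 1)) / U⌋ := by
  set e := (d - 1) / 2
  have hsep : ∀ c₁ ∈ C, ∀ c₂ ∈ C, c₁ ≠ c₂ → 2 * e < hammingDist c₁ c₂ := fun c₁ h₁ c₂ h₂ hne => by
    have := hdist c₁ h₁ c₂ h₂ hne
    have := hammingDist_pos.mpr hne
    omega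
  have hcover : C.card ≤ ∑ c ∈ C, (HFball c e).card := by
    simpa using sum_le_sum fun c hc =>
      Nat.one_le_iff_ne_zero.mpr (card_ne_zero_of_mem (self_mem_HFball (hC hc) e))
  have hpack : ∑ c ∈ C, (HFball c e).card ≤ q * (q - 1) ^ (n - 1) :=
    card_HFset hn ▸ sum_card_HFball_le_card_HFset hsep
  have hsum : ∑ c ∈ C, ∑ r ∈ range (e + 1), ((HFsphere c r).card : ℚ) =
      ((∑ c ∈ C, (HFball c e).card : ℕ) : ℚ) := by
    simp only [card_HFball, Nat.cast_sum]
  rw [hU, hsum, Int.le_floor, Int.cast_natCast]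
  refine le_div_div_of_le_of_le (Nat.cast_nonneg _) (by exact_mod_cast hcover) ?_
  rw [← Nat.cast_one, ← Nat.cast_sub (by omega), ← Nat.cast_pow, ← Nat.cast_mul]
  exact_mod_cast hpack

/-- `Ū` is the average over codewords `c ∈ C` of `Σ_{r=0}^{⌊(d−1)/2⌋} |H_r(c)|`,
and `M = |C| ≤ ⌊q(q−1)^{n−1}/Ū⌋`. -/
theorem stmt_15 (q n d : ℕ) (hq : 2 ≤ q) (hn : 1 ≤ n) (hd : 1 ≤ d)
    (C : Finset (Fin n → Fin q)) (hC : C ⊆ HFset q n) (hne : C.Nonempty)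
    (hdist : ∀ c₁ ∈ C, ∀ c₂ ∈ C, c₁ ≠ c₂ → d ≤ hammingDist c₁ c₂)
    (U : ℚ)
    (hU : U = (∑ c ∈ C, ∑ r ∈ Finset.range ((d - 1) / 2 + 1),
      ((HFsphere c r).card : ℚ)) / (C.card : ℚ)) :
    (C.card : ℤ) ≤ ⌊((q : ℚ) * ((q : ℚ) - 1) ^ (n - 1)) / U⌋ :=
  stmt_15_general q n d hq hn C hC hdist U hU
end
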